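/- Let N ≥ 1 be an integer, p > 2, T ∈ ℝ, and set C = (1/(2(p-1)(p-2))) · (e(p-2)/(2p))^{2p/(p-2)}. Then the function u₃(x,t) = C (T-t)^{-1/(p-2)} exp(-1/x_N) satisfies the pointwise super-solution inequality ∂_t u₃(x,t) - div_x(|Du₃(x,t)|^{p-2} Du₃(x,t)) ≥ 0 at every point (x,t) with 0 < x_N < 1/4 and t < T. -/

import Mathlib

open Real Filter

noncomputable section

/-- Divergence (in the space variables) of a vector field on Euclidean space. -/
noncomputable def sdiv {N : ℕ} (F : EuclideanSpace ℝ (Fin N) → EuclideanSpace ℝ (Fin N))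
    (x : EuclideanSpace ℝ (Fin N)) : ℝ :=
  ∑ i, fderiv ℝ F x (EuclideanSpace.single i 1) i

/-- The p-Laplace flux field `|Df|^{p-2} Df` of a function of the space variable. -/
noncomputable def pField {N : ℕ} (p : ℝ) (f : EuclideanSpace ℝ (Fin N) → ℝ)
    (x : EuclideanSpace ℝ (Fin N)) : EuclideanSpace ℝ (Fin N) :=
  ‖gradient f x‖ ^ (p - 2) • gradient f x

/-- `u` is a classical solution of the parabolic p-Laplace equation
`∂ₜ u = div (|Du|^{p-2} Du)` on `U`: at every point of `U`, `u` is differentiable in `t`,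
twice differentiable in `x` (the flux field being differentiable as well, so that its
spatial divergence is meaningful), and the equation holds pointwise. -/
def IsPSolOn {N : ℕ} (p : ℝ) (u : EuclideanSpace ℝ (Fin N) → ℝ → ℝ)
    (U : Set (EuclideanSpace ℝ (Fin N) × ℝ)) : Prop :=
  ∀ q ∈ U,
    DifferentiableAt ℝ (u q.1) q.2 ∧
    DifferentiableAt ℝ (fun y => u y q.2) q.1 ∧
    DifferentiableAt ℝ (gradient (fun y => u y q.2)) q.1 ∧
    DifferentiableAt ℝ (pField p (fun y => u y q.2)) q.1 ∧
    deriv (u q.1) q.2 = sdiv (pField p (fun y => u y q.2)) q.1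

/-- `u` is a classical super-solution of the parabolic p-Laplace equation on `U`:
at every point of `U`, `u` is differentiable in `t`, twice differentiable in `x`
(the flux field being differentiable as well), and
`∂ₜ u - div (|Du|^{p-2} Du) ≥ 0` holds pointwise. -/
def IsPSupersolOn {N : ℕ} (p : ℝ) (u : EuclideanSpace ℝ (Fin N) → ℝ → ℝ)
    (U : Set (EuclideanSpace ℝ (Fin N) × ℝ)) : Prop :=
  ∀ q ∈ U,
    DifferentiableAt ℝ (u q.1) q.2 ∧
    DifferentiableAt ℝ (fun y => u y q.2) q.1 ∧
    DifferentiableAt ℝ (gradient (fun y => u y q.2)) q.1 ∧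
    DifferentiableAt ℝ (pField p (fun y => u y q.2)) q.1 ∧
    0 ≤ deriv (u q.1) q.2 - sdiv (pField p (fun y => u y q.2)) q.1

lemma hasGradientAt_comp_proj {N : ℕ} (i : Fin N) {f : ℝ → ℝ} {d : ℝ}
    {x : EuclideanSpace ℝ (Fin N)} (hf : HasDerivAt f d (x i)) :
    HasGradientAt (fun y : EuclideanSpace ℝ (Fin N) => f (y i))
      (d • EuclideanSpace.single i (1:ℝ)) x := by
  rw [hasGradientAt_iff_hasFDerivAt]
  have h := hf.hasFDerivAt.comp x (EuclideanSpace.proj (𝕜 := ℝ) i).hasFDerivAt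
  refine h.congr_fderiv ?_
  ext y
  simp [InnerProductSpace.toDual_apply_apply, EuclideanSpace.inner_single_left, mul_comm]

lemma sdiv_single_eventuallyEq {N : ℕ} (i : Fin N) {h : ℝ → ℝ} {d : ℝ}
    {x : EuclideanSpace ℝ (Fin N)}
    {F : EuclideanSpace ℝ (Fin N) → EuclideanSpace ℝ (Fin N)}
    (hF : F =ᶠ[nhds x] fun y => h (y i) • EuclideanSpace.single i (1:ℝ))
    (hh : HasDerivAt h d (x i)) :
    DifferentiableAt ℝ F x ∧ sdiv F x = d := by
  have hc : HasFDerivAt (fun y : EuclideanSpace ℝ (Fin N) => h (y i))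
      ((d • (1:ℝ →L[ℝ] ℝ)).comp (EuclideanSpace.proj i)) x := by
    have := hh.hasFDerivAt.comp x (EuclideanSpace.proj (𝕜 := ℝ) i).hasFDerivAt
    refine this.congr_fderiv ?_
    ext y; simp [mul_comm]
  have hnice := hc.smul_const (EuclideanSpace.single i (1:ℝ))
  have hdF : DifferentiableAt ℝ F x :=
    (hF.differentiableAt_iff).mpr hnice.differentiableAt
  refine ⟨hdF, ?_⟩
  have hfd : fderiv ℝ F x = _ := hF.fderiv_eq
  rw [sdiv, hfd, hnice.fderiv]
  rw [Finset.sum_eq_single i]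
  · simp
  · intro j _ hji
    simp [EuclideanSpace.single_apply, hji]
  · simp

lemma ineq1 {x k : ℝ} (hx : 0 < x) (hk : 0 < k) :
    (Real.exp 1 * x / k) ^ k ≤ Real.exp x := by
  have hb : 0 < Real.exp 1 * x / k := by positivity
  rw [Real.rpow_def_of_pos hb, Real.exp_le_exp]
  have h1 : Real.log (Real.exp 1 * x / k) = 1 + Real.log (x / k) := by
    rw [mul_div_assoc, Real.log_mul (Real.exp_pos 1).ne' (by positivity), Real.log_exp]
  have h2 : Real.log (x / k) ≤ x / k - 1 := Real.log_le_sub_one_of_pos (by positivity)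
  have h3 : Real.log (Real.exp 1 * x / k) ≤ x / k := by rw [h1]; linarith
  calc Real.log (Real.exp 1 * x / k) * k ≤ (x / k) * k :=
        mul_le_mul_of_nonneg_right h3 hk.le
    _ = x := by field_simp

lemma ineq2 {q : ℝ} (hq : 0 < q) : (q + 1) * q ≤ (2 * ((q + 1) * q)) ^ q := by
  have hA : 0 < (q + 1) * q := by positivity
  have h2A : 0 < 2 * ((q + 1) * q) := by positivity
  rw [Real.le_rpow_iff_log_le hA h2A, Real.log_mul two_ne_zero hA.ne']
  have hl2 : 0 < Real.log 2 := Real.log_pos (by norm_num)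
  set L := Real.log ((q + 1) * q) with hL
  rcases le_or_gt ((q + 1) * q) 1 with hA1 | hA1
  · have hLle : L ≤ 0 := Real.log_nonpos hA.le hA1
    rcases le_or_gt 0 (Real.log 2 + L) with h | h
    · nlinarith
    · have hq1 : q ≤ 1 := by nlinarith
      nlinarith
  · have hL0 : 0 < L := Real.log_pos hA1
    have hq2 : 1 / 2 < q := by nlinarith
    rcases le_or_gt 1 q with h | h
    · nlinarith
    · have hAlt : (q + 1) * q < 2 := by nlinarith
      have hLlt : L < Real.log 2 := by
        rw [hL]; exact Real.log_lt_log hA hAlt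
      nlinarith

theorem stmt1 (N : ℕ) (hN : 1 ≤ N) (p T : ℝ) (hp : 2 < p) :
    let iN : Fin N := ⟨N - 1, by omega⟩
    let C : ℝ := (1 / (2 * (p - 1) * (p - 2))) * (Real.exp 1 * (p - 2) / (2 * p)) ^ (2 * p / (p - 2))
    let u₃ : EuclideanSpace ℝ (Fin N) → ℝ → ℝ :=
      fun x t => C * (T - t) ^ (-(1 / (p - 2))) * Real.exp (-(1 / x iN))
    IsPSupersolOn p u₃ {q | 0 < q.1 iN ∧ q.1 iN < 1 / 4 ∧ q.2 < T} := by
  intro iN C u₃ q hq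
  obtain ⟨hx0, hx4, htT⟩ := hq
  have hq2 : 0 < p - 2 := by linarith
  have hq1 : 0 < p - 1 := by linarith
  have hp0 : 0 < p := by linarith
  set x := q.1 with hxdef
  set t := q.2 with htdef
  have hτ : 0 < T - t := by linarith
  set s := x iN with hsdef
  have hs0 : 0 < s := hx0
  have hs4 : s < 1 / 4 := hx4
  have hsne : s ≠ 0 := hs0.ne'
  have hb : 0 < Real.exp 1 * (p - 2) / (2 * p) := by positivity
  have hC : 0 < C := by
    have h1 : (0:ℝ) < 2 * (p - 1) * (p - 2) := by nlinarith
    exact mul_pos (one_div_pos.mpr h1) (Real.rpow_pos_of_pos hb _)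
  set A1 : ℝ := (T - t) ^ (-(1 / (p - 2))) with hA1def
  have hA1 : 0 < A1 := Real.rpow_pos_of_pos hτ _
  set a : ℝ := C * A1 with hadef
  have ha : 0 < a := mul_pos hC hA1
  set E : ℝ := Real.exp (-(1 / s)) with hEdef
  have hE : 0 < E := Real.exp_pos _
  set eN : EuclideanSpace ℝ (Fin N) := EuclideanSpace.single iN (1:ℝ) with heNdef
  set c : ℝ → ℝ := fun r => a * (Real.exp (-(1 / r)) * (r ^ 2)⁻¹) with hcdef
  have hcpos : ∀ r : ℝ, 0 < r → 0 < c r := by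
    intro r hr
    have h2 : (0:ℝ) < (r ^ 2)⁻¹ := by positivity
    exact mul_pos ha (mul_pos (Real.exp_pos _) h2)
  -- derivative of the spatial profile
  have hprof : ∀ r : ℝ, r ≠ 0 →
      HasDerivAt (fun r' : ℝ => C * (T - t) ^ (-(1 / (p - 2))) * Real.exp (-(1 / r'))) (c r) r := by
    intro r hr
    have hinv : HasDerivAt (fun r' : ℝ => -(1 / r')) ((r ^ 2)⁻¹) r := by
      simpa [one_div] using (hasDerivAt_inv hr).fun_neg
    exact hinv.exp.const_mul _
  have grad_at : ∀ y : EuclideanSpace ℝ (Fin N), 0 < y iN →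
      HasGradientAt (fun z : EuclideanSpace ℝ (Fin N) =>
        C * (T - t) ^ (-(1 / (p - 2))) * Real.exp (-(1 / z iN))) (c (y iN) • eN) y :=
    fun y hy => hasGradientAt_comp_proj iN (hprof _ hy.ne')
  have hVopen : IsOpen {y : EuclideanSpace ℝ (Fin N) | 0 < y iN} :=
    isOpen_lt continuous_const (EuclideanSpace.proj iN).continuous
  have hmem : {y : EuclideanSpace ℝ (Fin N) | 0 < y iN} ∈ nhds x := hVopen.mem_nhds hs0
  -- derivative of c at s
  have hinv_s : HasDerivAt (fun r : ℝ => -(1 / r)) ((s ^ 2)⁻¹) s := by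
    simpa [one_div] using (hasDerivAt_inv hsne).fun_neg
  have hexp_s := hinv_s.exp
  have hsq : HasDerivAt (fun r : ℝ => r ^ 2) ((2:ℕ) * s ^ 1) s := hasDerivAt_pow 2 s
  have hinv2 := hsq.inv (pow_ne_zero 2 hsne)
  have hcder := (hexp_s.mul hinv2).const_mul a
  have hcder' : HasDerivAt c (a * E * (1 - 2 * s) / s ^ 4) s := by
    refine hcder.congr_deriv (Eq.symm ?_)
    simp only [Pi.inv_apply]
    rw [hEdef]
    field_simp
    ring
  have hcspos : 0 < c s := hcpos s hs0
  have hhder : HasDerivAt (fun r => c r ^ (p - 1))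
      (a * E * (1 - 2 * s) / s ^ 4 * (p - 1) * c s ^ (p - 1 - 1)) s :=
    hcder'.rpow_const (Or.inl hcspos.ne')
  rw [show p - 1 - 1 = p - 2 by ring] at hhder
  -- eventual formula for the flux field
  have hpEv : pField p (fun z : EuclideanSpace ℝ (Fin N) =>
        C * (T - t) ^ (-(1 / (p - 2))) * Real.exp (-(1 / z iN)))
      =ᶠ[nhds x] fun y => c (y iN) ^ (p - 1) • eN := by
    filter_upwards [hmem] with y hy
    have hg := (grad_at y hy).gradient
    have hcy : 0 < c (y iN) := hcpos _ hy
    simp only [pField]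
    rw [hg, heNdef, norm_smul, EuclideanSpace.norm_single, norm_one, mul_one,
      Real.norm_eq_abs, abs_of_pos hcy, smul_smul, ← Real.rpow_add_one hcy.ne',
      show p - 2 + 1 = p - 1 by ring]
  obtain ⟨hpdiff, hsdiv⟩ :=
    sdiv_single_eventuallyEq (h := fun r => c r ^ (p - 1)) iN hpEv hhder
  -- eventual formula for the gradient
  have hgradEv : (gradient fun z : EuclideanSpace ℝ (Fin N) =>
      C * (T - t) ^ (-(1 / (p - 2))) * Real.exp (-(1 / z iN)))
      =ᶠ[nhds x] fun y => c (y iN) • eN := by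
    filter_upwards [hmem] with y hy
    exact (grad_at y hy).gradient
  -- time derivative
  have htder : HasDerivAt (fun t' : ℝ => T - t') (-1) t := by
    simpa using (hasDerivAt_id t).const_sub T
  have hrp := htder.rpow_const (p := -(1 / (p - 2))) (Or.inl hτ.ne')
  have hu := (hrp.const_mul C).mul_const E
  refine ⟨hu.differentiableAt, (grad_at x hs0).differentiableAt, ?_, hpdiff, ?_⟩
  · have h1 := hcder'.hasFDerivAt.comp x (EuclideanSpace.proj (𝕜 := ℝ) iN).hasFDerivAt
    have h2 : DifferentiableAt ℝ (fun y : EuclideanSpace ℝ (Fin N) => c (y iN) • eN) x :=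
      (h1.smul_const eN).differentiableAt
    exact (hgradEv.differentiableAt_iff).mpr h2
  · have hderiv_eq : deriv (u₃ x) t
        = C * (-1 * -(1 / (p - 2)) * (T - t) ^ (-(1 / (p - 2)) - 1)) * E := hu.deriv
    have hsdiv_eq : sdiv (pField p fun y => u₃ y t) x
        = a * E * (1 - 2 * s) / s ^ 4 * (p - 1) * c s ^ (p - 2) := hsdiv
    rw [hderiv_eq, hsdiv_eq, sub_nonneg]
    -- closed forms
    have hDt : C * (-1 * -(1 / (p - 2)) * (T - t) ^ (-(1 / (p - 2)) - 1)) * E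
        = C * A1 * E / ((p - 2) * (T - t)) := by
      rw [Real.rpow_sub hτ, Real.rpow_one, ← hA1def]
      field_simp
    have ha2 : a ^ (p - 2) = C ^ (p - 2) * (T - t)⁻¹ := by
      rw [hadef, Real.mul_rpow hC.le hA1.le, hA1def, ← Real.rpow_mul hτ.le,
        show -(1 / (p - 2)) * (p - 2) = -1 by
          rw [neg_mul, one_div, inv_mul_cancel₀ hq2.ne'],
        Real.rpow_neg_one]
    have hE2 : E ^ (p - 2) = (Real.exp ((p - 2) / s))⁻¹ := by
      rw [hEdef, ← Real.exp_mul, ← Real.exp_neg]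
      congr 1
      ring
    have hinvp : ((s ^ 2 : ℝ)⁻¹) ^ (p - 2) = ((s ^ 2 : ℝ) ^ (p - 2))⁻¹ :=
      Real.inv_rpow (by positivity) _
    have hcsv : c s = a * (E * (s ^ 2)⁻¹) := rfl
    have hcs_eq : c s ^ (p - 2) =
        C ^ (p - 2) * (T - t)⁻¹ * ((Real.exp ((p - 2) / s))⁻¹ * ((s ^ 2 : ℝ) ^ (p - 2))⁻¹) := by
      rw [hcsv, Real.mul_rpow ha.le (mul_nonneg hE.le (by positivity)),
        Real.mul_rpow hE.le (by positivity), ha2, hE2, hinvp]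
    rw [hDt, hcs_eq, hadef]
    -- key scalar inequality
    have hX : 0 < Real.exp ((p - 2) / s) := Real.exp_pos _
    have hY : 0 < (s ^ 2 : ℝ) ^ (p - 2) := Real.rpow_pos_of_pos (by positivity) _
    have hCdef : C = 1 / (2 * ((p - 1) * (p - 2)))
        * (Real.exp 1 * (p - 2) / (2 * p)) ^ (2 * p / (p - 2)) := by
      rw [show 2 * ((p - 1) * (p - 2)) = 2 * (p - 1) * (p - 2) by ring]
    have h2A : (0:ℝ) < 2 * ((p - 1) * (p - 2)) := by positivity
    have hM : (0:ℝ) < (Real.exp 1 * (p - 2) / (2 * p)) ^ (2 * p) := Real.rpow_pos_of_pos hb _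
    have hCpow : C ^ (p - 2) = ((2 * ((p - 1) * (p - 2))) ^ (p - 2))⁻¹
        * (Real.exp 1 * (p - 2) / (2 * p)) ^ (2 * p) := by
      rw [hCdef, Real.mul_rpow (by positivity) (Real.rpow_nonneg hb.le _), one_div,
        Real.inv_rpow h2A.le, ← Real.rpow_mul hb.le, div_mul_cancel₀ _ hq2.ne']
    have hq' := ineq2 hq2
    rw [show p - 2 + 1 = p - 1 by ring] at hq'
    have k1 : (p - 1) * (p - 2) * C ^ (p - 2) ≤ (Real.exp 1 * (p - 2) / (2 * p)) ^ (2 * p) := by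
      calc (p - 1) * (p - 2) * C ^ (p - 2)
          = ((p - 1) * (p - 2)) * ((2 * ((p - 1) * (p - 2))) ^ (p - 2))⁻¹
            * (Real.exp 1 * (p - 2) / (2 * p)) ^ (2 * p) := by rw [hCpow]; ring
        _ ≤ 1 * (Real.exp 1 * (p - 2) / (2 * p)) ^ (2 * p) := by
            apply mul_le_mul_of_nonneg_right _ hM.le
            rw [← div_eq_mul_inv, div_le_one (Real.rpow_pos_of_pos h2A _)]
            exact hq'
        _ = (Real.exp 1 * (p - 2) / (2 * p)) ^ (2 * p) := one_mul _
    have hi1 := ineq1 (x := (p - 2) / s) (k := 2 * p) (div_pos hq2 hs0) (by positivity)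
    have hrw : Real.exp 1 * ((p - 2) / s) / (2 * p) = (Real.exp 1 * (p - 2) / (2 * p)) * s⁻¹ := by
      field_simp
    rw [hrw, Real.mul_rpow hb.le (by positivity), Real.inv_rpow hs0.le, ← div_eq_mul_inv,
      div_le_iff₀ (Real.rpow_pos_of_pos hs0 _)] at hi1
    have k3 : (s ^ 2 : ℝ) ^ (p - 2) * s ^ 4 = s ^ (2 * p) := by
      rw [← Real.rpow_natCast s 2, ← Real.rpow_natCast s 4, ← Real.rpow_mul hs0.le,
        ← Real.rpow_add hs0]
      congr 1
      push_cast
      ring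
    have key : (p - 1) * (p - 2) * C ^ (p - 2) * (1 - 2 * s)
        ≤ Real.exp ((p - 2) / s) * ((s ^ 2 : ℝ) ^ (p - 2) * s ^ 4) := by
      have hnn : 0 ≤ (p - 1) * (p - 2) * C ^ (p - 2) :=
        mul_nonneg (mul_nonneg hq1.le hq2.le) (Real.rpow_nonneg hC.le _)
      calc (p - 1) * (p - 2) * C ^ (p - 2) * (1 - 2 * s)
          ≤ (p - 1) * (p - 2) * C ^ (p - 2) * 1 :=
            mul_le_mul_of_nonneg_left (by linarith) hnn
        _ = (p - 1) * (p - 2) * C ^ (p - 2) := mul_one _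
        _ ≤ (Real.exp 1 * (p - 2) / (2 * p)) ^ (2 * p) := k1
        _ ≤ Real.exp ((p - 2) / s) * s ^ (2 * p) := hi1
        _ = Real.exp ((p - 2) / s) * ((s ^ 2 : ℝ) ^ (p - 2) * s ^ 4) := by rw [k3]
    -- final comparison
    have hden : 0 < Real.exp ((p - 2) / s) * ((s ^ 2 : ℝ) ^ (p - 2) * s ^ 4) :=
      mul_pos hX (mul_pos hY (by positivity))
    have hPpos : 0 < C * A1 * E / ((p - 2) * (T - t)) :=
      div_pos (mul_pos (mul_pos hC hA1) hE) (mul_pos hq2 hτ)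
    have hfinal : C * A1 * E * (1 - 2 * s) / s ^ 4 * (p - 1)
          * (C ^ (p - 2) * (T - t)⁻¹
            * ((Real.exp ((p - 2) / s))⁻¹ * ((s ^ 2 : ℝ) ^ (p - 2))⁻¹))
        = (C * A1 * E / ((p - 2) * (T - t)))
          * (((p - 1) * (p - 2) * C ^ (p - 2) * (1 - 2 * s))
            / (Real.exp ((p - 2) / s) * ((s ^ 2 : ℝ) ^ (p - 2) * s ^ 4))) := by
      field_simp
    rw [hfinal]
    calc (C * A1 * E / ((p - 2) * (T - t)))
          * (((p - 1) * (p - 2) * C ^ (p - 2) * (1 - 2 * s))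
            / (Real.exp ((p - 2) / s) * ((s ^ 2 : ℝ) ^ (p - 2) * s ^ 4)))
        ≤ (C * A1 * E / ((p - 2) * (T - t))) * 1 :=
          mul_le_mul_of_nonneg_left ((div_le_one hden).mpr key) hPpos.le
      _ = C * A1 * E / ((p - 2) * (T - t)) := mul_one _
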